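/- arXiv:2102.06188 — 3 statements merged into one kernel-verified Lean document; each statement's English description precedes it below -/
import Mathlib

section
/- For 0 ≤ i ≤ q−1 set θ_i := Σ_{λ∈K} σ_0(λ)^i [λ] ∈ 𝔽[K] (with the convention 0^0 = 1, so θ_0 = Σ_{λ∈K}[λ]). Then for every tuple (i_0,…,i_{f−1}) ∈ {0,…,p−1}^f with i := Σ_{j=0}^{f−1} i_j p^j < q−1 one has θ_i = (−1)^{f−1} · (∏_{j=0}^{f−1} i_j!) · ∏_{j=0}^{f−1} Y_j^{p−1−i_j} in 𝔽[K], where ∏_j i_j! denotes the image in 𝔽 of the integer ∏_j i_j!. (Paper: Lemma 'lem:theta'(i) in §3.2.2.) -/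
/-!
Setup (§3.2.2 of the paper): `p > 2` is prime, `q = p^f`, `K` is a finite field with `q`
elements, `𝔽` a field with a ring embedding `σ₀ : K → 𝔽`, and `σ_j(a) = σ₀(a)^{p^j}`.
`𝔽[K]` is the group algebra over `𝔽` of the additive group of `K`
(`AddMonoidAlgebra 𝔽 K`), with canonical basis `[a] = AddMonoidAlgebra.single a 1`, and
`Y_j = Σ_{a ∈ K^×} σ_j(a)^{−1} [a]`.
-/

namespace BHHMS

/-- `Y_j = Σ_{a ∈ K^×} σ_j(a)^{−1} [a] ∈ 𝔽[K]`, where `σ_j(a) = σ₀(a)^{p^j}`. -/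
noncomputable def Yelt (p : ℕ) {K 𝔽 : Type*} [Field K] [Fintype K] [DecidableEq K] [Field 𝔽]
    (σ₀ : K →+* 𝔽) (j : ℕ) : AddMonoidAlgebra 𝔽 K :=
  ∑ a : Kˣ, AddMonoidAlgebra.single ((a : K) : K) ((σ₀ (a : K) ^ p ^ j)⁻¹)

/-- `θ_i = Σ_{λ ∈ K} σ₀(λ)^i [λ] ∈ 𝔽[K]` (with the convention `0^0 = 1`). -/
noncomputable def thetaElt {K 𝔽 : Type*} [Field K] [Fintype K] [Field 𝔽]
    (σ₀ : K →+* 𝔽) (i : ℕ) : AddMonoidAlgebra 𝔽 K :=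
  ∑ a : K, AddMonoidAlgebra.single a (σ₀ a ^ i)

end BHHMS

/-!
Since `σ_j(a)⁻¹ = σ₀(a)^(q-1-p^j)` on `K^×`, `Y_j = θ_{q-1-p^j}`. Multiplication in `𝔽[K]` is
convolution, and the power sums `∑_{a ∈ K} a^r` show `θ_m θ_{q-1-e} = -(-1)^e C(m,e) θ_{m-e}`.
By Lucas, `C(m, p^j) ≡ m_j (mod p)` is the `j`-th digit of `m`, so multiplying `θ_m` by `Y_j`
lowers that digit by one at the cost of a factor `m_j`. Starting from `θ_{q-1}`, all of whose
digits are `p-1` and which acts as `-1` on every `Y_j`, multiplying by `∏ Y_j^(p-1-i_j)`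
gives `θ_i` times `∏ (p-1)!/i_j!`, and Wilson's theorem `(p-1)! = -1` finishes the proof.
-/

open Finset

theorem Nat.choose_prime_pow_modEq {p : ℕ} [Fact p.Prime] (m j : ℕ) :
    m.choose (p ^ j) ≡ m / p ^ j % p [MOD p] := by
  induction j generalizing m with
  | zero => simpa using (Nat.mod_modEq m p).symm
  | succ j ih =>
    have hp : 0 < p := (Fact.out : p.Prime).pos
    refine Choose.choose_modEq_choose_mod_mul_choose_div_nat.trans ?_
    rw [pow_succ', Nat.mul_mod_right, Nat.mul_div_cancel_left _ hp, Nat.choose_zero_right,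
      one_mul, ← Nat.div_div_eq_div_mul]
    exact ih (m / p)

theorem Nat.sub_mul_div_mod_eq_div_mod_sub {m b p t : ℕ} (ht : t ≤ m / b % p) :
    (m - t * b) / b % p = m / b % p - t := by
  rw [mul_comm, Nat.sub_mul_div]
  rcases Nat.eq_zero_or_pos p with rfl | hp
  · simp
  have hdiv := Nat.mod_add_div (m / b) p
  have hlt := Nat.mod_lt (m / b) hp
  rw [show m / b - t = (m / b % p - t) + p * (m / b / p) by omega, Nat.add_mul_mod_self_left,
    Nat.mod_eq_of_lt (by omega)]

theorem Nat.pow_sub_one_sub_div_pow_mod {p f n S : ℕ} (hp : 0 < p) (hn : n < f)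
    (hS : S < p ^ n) : (p ^ f - 1 - S) / p ^ n % p = p - 1 := by
  obtain ⟨k, rfl⟩ := Nat.exists_eq_add_of_lt hn
  have hpk : 1 ≤ p ^ k := Nat.one_le_pow _ _ hp
  have hpp : p ≤ p * p ^ k := Nat.le_mul_of_pos_right p hpk
  have hsplit : p ^ (n + k + 1) = p ^ n * p ^ (k + 1) := by ring
  rw [Nat.sub_sub, hsplit, Nat.add_comm 1 S,
    Nat.mul_sub_div S _ _ (hS.trans_le (Nat.le_mul_of_pos_right _ (by positivity))),
    Nat.div_eq_of_lt hS, pow_succ', show p * p ^ k - (0 + 1) = (p - 1) + p * (p ^ k - 1) by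
      rw [Nat.mul_sub_one]; omega,
    Nat.add_mul_mod_self_left, Nat.mod_eq_of_lt (by omega)]

theorem Nat.sum_range_sub_one_mul_pow {p : ℕ} (hp : 0 < p) (n : ℕ) :
    ∑ j ∈ range n, (p - 1) * p ^ j = p ^ n - 1 := by
  have h := geom_sum_mul_add (p - 1) n
  rw [Nat.sub_one_add_one hp.ne'] at h
  rw [← mul_sum, mul_comm]
  omega

theorem Nat.sum_range_mul_pow_lt {p : ℕ} (hp : 0 < p) {k : ℕ → ℕ} (hk : ∀ j, k j ≤ p - 1)
    (n : ℕ) : ∑ j ∈ range n, k j * p ^ j < p ^ n := by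
  have hle : ∑ j ∈ range n, k j * p ^ j ≤ ∑ j ∈ range n, (p - 1) * p ^ j :=
    sum_le_sum fun j _ ↦ Nat.mul_le_mul_right _ (hk j)
  rw [Nat.sum_range_sub_one_mul_pow hp] at hle
  have := Nat.one_le_pow n p hp
  omega

theorem Nat.pow_lt_pow_sub_one {p j f : ℕ} (hp : 2 < p) (hj : j < f) : p ^ j < p ^ f - 1 := by
  have h1 : 1 ≤ p ^ j := Nat.one_le_pow _ _ (by omega)
  have h3 : p ^ j * 3 ≤ p ^ f := (Nat.mul_le_mul_left _ hp).trans
    (by rw [← pow_succ]; exact Nat.pow_le_pow_right (by omega) hj)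
  omega

theorem CharP.wilsons_lemma (R : Type*) [Ring R] (p : ℕ) [Fact p.Prime] [CharP R p] :
    (((p - 1).factorial : ℕ) : R) = -1 := by
  have h := congrArg (ZMod.castHom (dvd_refl p) R) (ZMod.wilsons_lemma (p := p))
  rwa [map_natCast, map_neg, map_one] at h

theorem sum_units_eq_sum_of_map_zero {G₀ M : Type*} [GroupWithZero G₀] [Fintype G₀]
    [DecidableEq G₀] [AddCommMonoid M] {g : G₀ → M} (hg : g 0 = 0) :
    ∑ x : G₀ˣ, g x = ∑ x, g x := by
  rw [← Finset.sum_filter_of_ne (s := univ) (p := fun x : G₀ ↦ x ≠ 0)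
      fun x _ hx h ↦ hx (by simp_all),
    Finset.sum_subtype _ (p := fun x : G₀ ↦ x ≠ 0) (by simp)]
  exact Fintype.sum_equiv unitsEquivNeZero _ _ fun _ ↦ rfl

namespace FiniteField

variable {K : Type*} [Field K] [Fintype K]

theorem sum_pow_of_ne_zero {r : ℕ} (hr : r ≠ 0) :
    ∑ x : K, x ^ r = if Fintype.card K - 1 ∣ r then -1 else 0 := by
  classical
  rw [← FiniteField.sum_pow_units K r]
  exact (sum_units_eq_sum_of_map_zero (g := (· ^ r)) (zero_pow hr)).symm

/-- Expanding `(c - a)^m` binomially, only the term `a^e` survives the power sums over `K`. -/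
theorem sum_sub_pow_mul_pow_card_sub_one_sub {m e : ℕ} (he : 0 < e)
    (he' : e < Fintype.card K - 1) (hm : m < Fintype.card K - 1 + e) (c : K) :
    ∑ a : K, (c - a) ^ m * a ^ (Fintype.card K - 1 - e)
      = -(-1) ^ e * m.choose e * c ^ (m - e) := by
  set q := Fintype.card K
  have hsum : ∀ t ≤ m, ∑ a : K, a ^ (t + (q - 1 - e)) = if t = e then -1 else 0 := by
    intro t ht
    rw [sum_pow_of_ne_zero (by omega)]
    congr 1
    refine propext ⟨fun h ↦ ?_, fun h ↦ h ▸ ⟨1, by omega⟩⟩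
    have := Nat.eq_of_dvd_of_lt_two_mul (by omega) h (by omega)
    omega
  calc ∑ a : K, (c - a) ^ m * a ^ (q - 1 - e)
      = ∑ t ∈ range (m + 1), (-1) ^ t * m.choose t * c ^ (m - t) *
          ∑ a : K, a ^ (t + (q - 1 - e)) := by
        simp_rw [sub_eq_neg_add c, add_pow, sum_mul, mul_sum]
        rw [sum_comm]
        refine sum_congr rfl fun t _ ↦ sum_congr rfl fun a _ ↦ ?_
        ring
    _ = -(-1) ^ e * m.choose e * c ^ (m - e) := by
        rw [sum_congr rfl fun t ht ↦ by rw [hsum t (Nat.lt_succ_iff.mp (mem_range.mp ht))]]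
        simp only [mul_ite, mul_neg, mul_one, mul_zero, sum_ite_eq', mem_range]
        split_ifs with h
        · ring
        · simp [Nat.choose_eq_zero_of_lt (by omega : m < e)]

end FiniteField

namespace BHHMS

open AddMonoidAlgebra

section GroupAlgebra

variable {K 𝔽 : Type*} [Field K] [Fintype K] [Field 𝔽] (σ₀ : K →+* 𝔽)

theorem thetaElt_mul (m n : ℕ) :
    thetaElt σ₀ m * thetaElt σ₀ n
      = ∑ c : K, single c (σ₀ (∑ a : K, (c - a) ^ m * a ^ n)) := by
  have hshift : ∀ a : K, ∑ b : K, single b (σ₀ b ^ m) * single a (σ₀ a ^ n)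
      = ∑ c : K, single c (σ₀ ((c - a) ^ m * a ^ n)) := fun a ↦
    Fintype.sum_equiv (Equiv.addRight a) _ _ fun b ↦ by simp [single_mul_single]
  rw [thetaElt, thetaElt, sum_mul_sum, sum_comm]
  simp_rw [hshift]
  rw [sum_comm]
  simp_rw [map_sum]
  exact sum_congr rfl fun c _ ↦ (map_sum (singleAddHom c) _ _).symm

theorem thetaElt_mul_thetaElt_card_sub_one_sub {m e : ℕ} (he : 0 < e)
    (he' : e < Fintype.card K - 1) (hm : m < Fintype.card K - 1 + e) :
    thetaElt σ₀ m * thetaElt σ₀ (Fintype.card K - 1 - e)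
      = (-(-1) ^ e * m.choose e : 𝔽) • thetaElt σ₀ (m - e) := by
  rw [thetaElt_mul]
  simp only [FiniteField.sum_sub_pow_mul_pow_card_sub_one_sub he he' hm, thetaElt, smul_sum,
    smul_single', map_mul, map_pow, map_neg, map_one, map_natCast]

variable [DecidableEq K]

theorem Yelt_eq_thetaElt (p j : ℕ) (hj : p ^ j < Fintype.card K - 1) :
    Yelt p σ₀ j = thetaElt σ₀ (Fintype.card K - 1 - p ^ j) := by
  rw [Yelt, thetaElt, ← sum_units_eq_sum_of_map_zero
    (g := fun a ↦ single a (σ₀ a ^ (Fintype.card K - 1 - p ^ j)))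
    (by simp [zero_pow (by omega : Fintype.card K - 1 - p ^ j ≠ 0)])]
  refine sum_congr rfl fun u _ ↦ congrArg _ (eq_inv_of_mul_eq_one_left ?_).symm
  rw [← map_pow, ← map_pow, ← map_mul, ← pow_add, Nat.sub_add_cancel hj.le,
    FiniteField.pow_card_sub_one_eq_one _ u.ne_zero, map_one]

variable {p : ℕ} [Fact p.Prime] [CharP 𝔽 p]

theorem thetaElt_mul_Yelt (hp : Odd p) {m j : ℕ} (hm : m ≤ Fintype.card K - 1)
    (hj : p ^ j < Fintype.card K - 1) :
    thetaElt σ₀ m * Yelt p σ₀ j = ((m / p ^ j % p : ℕ) : 𝔽) • thetaElt σ₀ (m - p ^ j) := by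
  have hpj : 0 < p ^ j := pow_pos hp.pos j
  rw [Yelt_eq_thetaElt σ₀ p j hj, thetaElt_mul_thetaElt_card_sub_one_sub σ₀ hpj hj (by omega),
    hp.pow.neg_one_pow, neg_neg, one_mul,
    CharP.natCast_eq_natCast' 𝔽 p (Nat.choose_prime_pow_modEq m j)]

theorem thetaElt_mul_Yelt_pow (hp : Odd p) {m j : ℕ} (hm : m ≤ Fintype.card K - 1)
    (hj : p ^ j < Fintype.card K - 1) {t : ℕ} (ht : t ≤ m / p ^ j % p) :
    thetaElt σ₀ m * Yelt p σ₀ j ^ t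
      = ((m / p ^ j % p).descFactorial t : 𝔽) • thetaElt σ₀ (m - t * p ^ j) := by
  induction t with
  | zero => simp
  | succ t ih =>
    rw [pow_succ, ← mul_assoc, ih (by omega), smul_mul_assoc,
      thetaElt_mul_Yelt σ₀ hp (by omega) hj, Nat.sub_mul_div_mod_eq_div_mod_sub (by omega),
      smul_smul, Nat.descFactorial_succ, Nat.cast_mul, mul_comm, Nat.sub_sub, ← Nat.succ_mul]

variable {f : ℕ}

/-- Subtracting `∑_{j<n} k_j p^j < p^n` from `q - 1` leaves the digits at positions `≥ n` equal
to `p - 1`, so each factor `Y_n^(k_n)` contributes `(p-1)(p-2)⋯(p-k_n)`. -/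
theorem thetaElt_card_sub_one_mul_prod_Yelt_pow (hp : 2 < p) (hK : Fintype.card K = p ^ f)
    {k : ℕ → ℕ} (hk : ∀ j, k j ≤ p - 1) {n : ℕ} (hn : n ≤ f) :
    thetaElt σ₀ (Fintype.card K - 1) * ∏ j ∈ range n, Yelt p σ₀ j ^ k j
      = ((∏ j ∈ range n, (p - 1).descFactorial (k j) : ℕ) : 𝔽) •
          thetaElt σ₀ (Fintype.card K - 1 - ∑ j ∈ range n, k j * p ^ j) := by
  induction n with
  | zero => simp
  | succ n ih =>
    have hodd : Odd p := (Fact.out : p.Prime).odd_of_ne_two hp.ne'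
    have hdigit : (p ^ f - 1 - ∑ j ∈ range n, k j * p ^ j) / p ^ n % p = p - 1 :=
      Nat.pow_sub_one_sub_div_pow_mod (by omega) hn (Nat.sum_range_mul_pow_lt (by omega) hk n)
    rw [prod_range_succ, ← mul_assoc, ih (by omega), smul_mul_assoc, hK,
      thetaElt_mul_Yelt_pow σ₀ hodd (by omega) (hK ▸ Nat.pow_lt_pow_sub_one hp hn) (hdigit ▸ hk n),
      hdigit, smul_smul, prod_range_succ, Nat.cast_mul, sum_range_succ, Nat.sub_sub]

theorem thetaElt_card_sub_one_mul_of_Yelt_dvd (hp : 2 < p) (hK : Fintype.card K = p ^ f)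
    {j : ℕ} (hj : j < f) {Z : AddMonoidAlgebra 𝔽 K} (hZ : Yelt p σ₀ j ∣ Z) :
    thetaElt σ₀ (Fintype.card K - 1) * Z = -Z := by
  have hpj : p ^ j < Fintype.card K - 1 := hK ▸ Nat.pow_lt_pow_sub_one hp hj
  have hdigit : (p ^ f - 1) / p ^ j % p = p - 1 := by
    simpa using Nat.pow_sub_one_sub_div_pow_mod (S := 0) (by omega) hj (pow_pos (by omega) j)
  have hY : thetaElt σ₀ (Fintype.card K - 1) * Yelt p σ₀ j = -Yelt p σ₀ j := by
    rw [thetaElt_mul_Yelt σ₀ ((Fact.out : p.Prime).odd_of_ne_two hp.ne') le_rfl hpj,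
      ← Yelt_eq_thetaElt σ₀ p j hpj, hK, hdigit, Nat.cast_sub (by omega), CharP.cast_eq_zero,
      Nat.cast_one, zero_sub, neg_one_smul]
  obtain ⟨W, rfl⟩ := hZ
  rw [← mul_assoc, hY, neg_mul]

theorem thetaElt_eq_smul_prod_range_Yelt_pow (hp : 2 < p) (hK : Fintype.card K = p ^ f)
    {d : ℕ → ℕ} (hd : ∀ j < f, d j ≤ p - 1) (hlt : ∑ j ∈ range f, d j * p ^ j < p ^ f - 1) :
    thetaElt σ₀ (∑ j ∈ range f, d j * p ^ j)
      = ((-1 : 𝔽) ^ (f - 1) * ∏ j ∈ range f, ((d j).factorial : 𝔽)) •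
          ∏ j ∈ range f, Yelt p σ₀ j ^ (p - 1 - d j) := by
  have hcompl : ∑ j ∈ range f, (p - 1 - d j) * p ^ j + ∑ j ∈ range f, d j * p ^ j
      = p ^ f - 1 := by
    rw [← sum_add_distrib, ← Nat.sum_range_sub_one_mul_pow (by omega)]
    refine sum_congr rfl fun j hj ↦ ?_
    rw [← add_mul, Nat.sub_add_cancel (hd j (mem_range.1 hj))]
  obtain ⟨j₀, hj₀, hdj₀⟩ : ∃ j < f, d j < p - 1 := by
    by_contra! h
    refine hlt.ne ?_
    rw [← Nat.sum_range_sub_one_mul_pow (by omega)]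
    exact sum_congr rfl fun j hj ↦ by rw [(hd j (mem_range.1 hj)).antisymm (h j (mem_range.1 hj))]
  have hdvd : Yelt p σ₀ j₀ ∣ ∏ j ∈ range f, Yelt p σ₀ j ^ (p - 1 - d j) :=
    (dvd_pow_self _ (by omega)).trans (dvd_prod_of_mem _ (mem_range.2 hj₀))
  have hprod := thetaElt_card_sub_one_mul_prod_Yelt_pow σ₀ hp hK
    (k := fun j ↦ p - 1 - d j) (fun _ ↦ Nat.sub_le _ _) le_rfl
  rw [thetaElt_card_sub_one_mul_of_Yelt_dvd σ₀ hp hK hj₀ hdvd, hK,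
    show p ^ f - 1 - ∑ j ∈ range f, (p - 1 - d j) * p ^ j = ∑ j ∈ range f, d j * p ^ j by omega,
    neg_eq_iff_eq_neg] at hprod
  have hwilson : (∏ j ∈ range f, ((d j).factorial : 𝔽)) *
      ((∏ j ∈ range f, (p - 1).descFactorial (p - 1 - d j) : ℕ) : 𝔽) = (-1) ^ f := by
    rw [Nat.cast_prod, ← prod_mul_distrib, prod_congr rfl fun j hj ↦ ?_, prod_const, card_range]
    have h := Nat.factorial_mul_descFactorial (Nat.sub_le (p - 1) (d j))
    rw [Nat.sub_sub_self (hd j (mem_range.1 hj))] at h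
    rw [← Nat.cast_mul, h, CharP.wilsons_lemma]
  obtain ⟨g, rfl⟩ : ∃ g, f = g + 1 := ⟨f - 1, by omega⟩
  rw [hprod, smul_neg, smul_smul, ← neg_smul, mul_assoc, hwilson, Nat.add_sub_cancel, pow_succ,
    ← mul_assoc, ← pow_add, Even.neg_one_pow ⟨g, rfl⟩]
  simp

end GroupAlgebra

theorem statement15_general (p f : ℕ) [Fact p.Prime] (hp : 2 < p)
    (K : Type*) [Field K] [Fintype K] [DecidableEq K] (hK : Fintype.card K = p ^ f)
    (𝔽 : Type*) [Field 𝔽] (σ₀ : K →+* 𝔽)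
    (idx : Fin f → ℕ) (hidx : ∀ j, idx j ≤ p - 1)
    (hlt : ∑ j : Fin f, idx j * p ^ (j : ℕ) < p ^ f - 1) :
    thetaElt σ₀ (∑ j : Fin f, idx j * p ^ (j : ℕ))
      = ((-1 : 𝔽) ^ (f - 1) * ∏ j : Fin f, ((idx j).factorial : 𝔽)) •
          ∏ j : Fin f, Yelt p σ₀ (j : ℕ) ^ (p - 1 - idx j) := by
  have : CharP K p := charP_of_card_eq_prime_pow hK
  have : CharP 𝔽 p := charP_of_injective_ringHom σ₀.injective p
  set d : ℕ → ℕ := fun j ↦ if h : j < f then idx ⟨j, h⟩ else 0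
  have hd : ∀ j : Fin f, d j = idx j := fun j ↦ by simp [d]
  have hsum : ∑ j ∈ range f, d j * p ^ j = ∑ j : Fin f, idx j * p ^ (j : ℕ) := by
    simp [sum_range, hd]
  have := thetaElt_eq_smul_prod_range_Yelt_pow σ₀ hp hK (d := d)
    (fun j hj ↦ by simpa [d, hj] using hidx ⟨j, hj⟩) (hsum ▸ hlt)
  simpa [prod_range, sum_range, hd] using this

/-- Lemma `lem:theta`(i), §3.2.2.  For every tuple
`(i_0,…,i_{f−1}) ∈ {0,…,p−1}^f` with `i = Σ_j i_j p^j < q − 1` one has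
`θ_i = (−1)^{f−1} (∏_j i_j!) ∏_j Y_j^{p−1−i_j}` in `𝔽[K]`. -/
theorem statement15 (p f : ℕ) [Fact p.Prime] (hp : 2 < p) (hf : 1 ≤ f)
    (K : Type*) [Field K] [Fintype K] [DecidableEq K] (hK : Fintype.card K = p ^ f)
    (𝔽 : Type*) [Field 𝔽] (σ₀ : K →+* 𝔽)
    (idx : Fin f → ℕ) (hidx : ∀ j, idx j ≤ p - 1)
    (hlt : ∑ j : Fin f, idx j * p ^ (j : ℕ) < p ^ f - 1) :
    thetaElt σ₀ (∑ j : Fin f, idx j * p ^ (j : ℕ))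
      = ((-1 : 𝔽) ^ (f - 1) * ∏ j : Fin f, ((idx j).factorial : 𝔽)) •
          ∏ j : Fin f, Yelt p σ₀ (j : ℕ) ^ (p - 1 - idx j) :=
  statement15_general p f hp K hK 𝔽 σ₀ idx hidx hlt

end BHHMS
end

section
/- Assume f > 1. Then in the group algebra 𝔽[K] one has Σ_{λ ∈ K, Tr_{K/𝔽_p}(λ) = 0} [λ] = (−1)^{f−1} ( ∏_{j=0}^{f−1} Y_j^{p−1} + Σ_{(i_0,…,i_{f−1})} ∏_{j=0}^{f−1} Y_j^{i_j} ), where the last sum runs over all tuples (i_0,…,i_{f−1}) with 0 ≤ i_j ≤ p−1 for all j and Σ_{j=0}^{f−1} i_j = (p−1)(f−1). (Paper: Lemma 'lem:tr0' in §3.2.2.) -/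
/-!
Write `S m = ∑_{a ∈ K} σ₀(a)^m [a]`. Since `Tr λ = ∑_j λ^(p^j)` lies in `𝔽_p`, where `x^(p-1)` is
the indicator of `x ≠ 0`, the left side equals `S 0 - ∑_a σ₀(Tr a)^(p-1) [a]`, and the multinomial
theorem expands this into the elements `S (∑_j k_j p^j)` with `∑_j k_j = p - 1`.

On the other side `Y_j = S (q - 1 - p^j)`, and a Jacobi-sum computation gives
`Y_j * S m = (m choose p^j) • S (m - p^j)`; by Lucas' theorem the binomial coefficient is the
`j`-th base-`p` digit of `m`, so `Y_j` acts on the exponent by lowering its `j`-th digit.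
Applying a monomial in the `Y_j` to `S (q - 1) = S 0 - [0]`, all of whose digits are `p - 1`, and
using `Y_j * S 0 = 0` expresses each such monomial as a multiple of a single `S m`; Wilson's
theorem identifies the constants with the multinomial coefficients.
-/

namespace BHHMS

open Finset

section GroupAlgebra

variable {R G : Type*} [CommRing R] [Fintype G]

noncomputable def ofFun (g : G → R) : AddMonoidAlgebra R G :=
  ∑ a, AddMonoidAlgebra.single a (g a)

lemma ofFun_sub (g h : G → R) : ofFun (g - h) = ofFun g - ofFun h := by
  simp only [ofFun, Pi.sub_apply, AddMonoidAlgebra.single_sub, sum_sub_distrib]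

lemma ofFun_sum {ι : Type*} (s : Finset ι) (g : ι → G → R) :
    ofFun (∑ i ∈ s, g i) = ∑ i ∈ s, ofFun (g i) := by
  simp only [ofFun, Finset.sum_apply, ← AddMonoidAlgebra.singleAddHom_apply, map_sum]
  exact sum_comm

lemma ofFun_smul (c : R) (g : G → R) : ofFun (c • g) = c • ofFun g := by
  simp only [ofFun, Pi.smul_apply, smul_eq_mul, smul_sum, AddMonoidAlgebra.smul_single']

lemma ofFun_mul_ofFun [AddCommGroup G] (g h : G → R) :
    ofFun g * ofFun h = ofFun fun c => ∑ a, g a * h (c - a) := by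
  simp only [ofFun, sum_mul_sum, ← AddMonoidAlgebra.singleAddHom_apply, map_sum]
  conv_rhs => rw [sum_comm]
  exact sum_congr rfl fun a _ => Fintype.sum_equiv (Equiv.addLeft a) _ _ fun b => by simp

end GroupAlgebra

lemma sum_units_eq_sum {G₀ M : Type*} [GroupWithZero G₀] [Fintype G₀] [Fintype G₀ˣ]
    [AddCommMonoid M] {g : G₀ → M} (h0 : g 0 = 0) :
    ∑ u : G₀ˣ, g u = ∑ a, g a := by
  classical
  rw [← Fintype.sum_equiv unitsEquivNeZero.symm (fun a => g a) _ (fun _ => rfl),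
    ← Finset.sum_subtype (univ.filter (· ≠ 0)) (by simp), sum_filter_of_ne]
  rintro a - ha rfl
  exact ha h0

section FiniteField

variable {K : Type*} [Field K] [Fintype K]

local notation "q" => Fintype.card K

lemma sum_pow_eq_ite {N : ℕ} (hN : N ≠ 0) :
    ∑ a : K, a ^ N = if q - 1 ∣ N then -1 else 0 := by
  classical
  rw [← sum_units_eq_sum (g := (· ^ N)) (zero_pow hN), FiniteField.sum_pow_units]

lemma sum_pow_card_sub_one_sub_add {n k : ℕ} (hn : 0 < n) (hnq : n < q - 1) (hk : k ≤ q - 1) :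
    ∑ a : K, a ^ (q - 1 - n + k) = if k = n then -1 else 0 := by
  rw [sum_pow_eq_ite (by omega)]
  refine if_congr ⟨fun h => ?_, fun h => by rw [h, Nat.sub_add_cancel hnq.le]⟩ rfl rfl
  have hle := Nat.le_of_dvd (by omega) h
  have := Nat.eq_zero_of_dvd_of_lt (Nat.dvd_sub h dvd_rfl) (by omega)
  omega

lemma sum_pow_mul_sub_pow {n m : ℕ} (hn : 0 < n) (hnq : n < q - 1) (hm : m ≤ q - 1) (c : K) :
    ∑ a : K, a ^ (q - 1 - n) * (c - a) ^ m = (-1) ^ (n + 1) * m.choose n * c ^ (m - n) := by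
  calc ∑ a : K, a ^ (q - 1 - n) * (c - a) ^ m
      = ∑ k ∈ range (m + 1),
          (-1) ^ k * c ^ (m - k) * m.choose k * ∑ a : K, a ^ (q - 1 - n + k) := by
        simp only [sub_eq_neg_add c, add_pow, mul_sum]
        rw [sum_comm]
        refine sum_congr rfl fun k _ => sum_congr rfl fun a _ => ?_
        rw [neg_pow, pow_add]
        ring
    _ = ∑ k ∈ range (m + 1), if k = n then (-1) ^ (n + 1) * m.choose n * c ^ (m - n) else 0 := by
        refine sum_congr rfl fun k hk => ?_
        rw [sum_pow_card_sub_one_sub_add hn hnq ((Nat.lt_succ_iff.1 (mem_range.1 hk)).trans hm)]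
        split_ifs with h
        · subst h; ring
        · simp
    _ = (-1) ^ (n + 1) * m.choose n * c ^ (m - n) := by
        rw [sum_ite_eq']
        split_ifs with h
        · rfl
        · rw [Nat.choose_eq_zero_of_lt (by simpa using h)]; simp

end FiniteField

lemma choose_pow_modEq_div_pow_mod (p : ℕ) [Fact p.Prime] (m j : ℕ) :
    m.choose (p ^ j) ≡ m / p ^ j % p [MOD p] := by
  induction j generalizing m with
  | zero => simpa using (Nat.mod_modEq m p).symm
  | succ j ih =>
    have hp := (Fact.out : p.Prime).pos
    calc m.choose (p ^ (j + 1))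
        ≡ (m % p).choose (p ^ (j + 1) % p) * (m / p).choose (p ^ (j + 1) / p) [MOD p] :=
          Choose.choose_modEq_choose_mod_mul_choose_div_nat
      _ = (m / p).choose (p ^ j) := by
          rw [pow_succ, Nat.mul_mod_left, Nat.mul_div_cancel _ hp, Nat.choose_zero_right, one_mul]
      _ ≡ m / p ^ (j + 1) % p [MOD p] := by
          rw [pow_succ', ← Nat.div_div_eq_div_mul]; exact ih _

lemma sub_mod_eq_mod_sub {a i p : ℕ} (hi : i ≤ a % p) : (a - i) % p = a % p - i := by
  rcases Nat.eq_zero_or_pos p with rfl | hp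
  · simp
  have h : a - i = (a % p - i) + p * (a / p) := by have := Nat.mod_add_div a p; omega
  rw [h, Nat.add_mul_mod_self_left, Nat.mod_eq_of_lt (by have := Nat.mod_lt a hp; omega)]

lemma mod_pow_eq_of_mod_pow_succ {m p n : ℕ} (hp : 0 < p)
    (h : m % p ^ (n + 1) = p ^ (n + 1) - 1) : m % p ^ n = p ^ n - 1 ∧ m / p ^ n % p = p - 1 := by
  rw [Nat.mod_pow_succ, pow_succ] at h
  have ha := Nat.mod_lt m (pow_pos hp n)
  have hd := Nat.mod_lt (m / p ^ n) hp
  generalize m % p ^ n = a at *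
  generalize m / p ^ n % p = d at *
  generalize p ^ n = P at *
  obtain ⟨e, rfl⟩ : ∃ e, p = d + e + 1 := ⟨p - d - 1, by omega⟩
  have : P * e = 0 := by rw [mul_add, mul_add] at h; omega
  obtain rfl : e = 0 := (mul_eq_zero.1 this).resolve_left (by omega)
  simp only [add_zero, mul_add, mul_one] at h ⊢
  omega

lemma pow_lt_pow_sub_one {p j f : ℕ} (hp : 2 < p) (hj : j < f) : p ^ j < p ^ f - 1 := by
  have h1 : p ^ j * p ≤ p ^ f := pow_succ p j ▸ Nat.pow_le_pow_right (by omega) hj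
  have h2 : 1 ≤ p ^ j := Nat.one_le_pow _ _ (by omega)
  have h3 : p ^ j * 3 ≤ p ^ j * p := Nat.mul_le_mul_left _ hp
  omega

lemma sum_sub_one_mul_pow {p : ℕ} (hp : 0 < p) (f : ℕ) :
    ∑ j : Fin f, (p - 1) * p ^ (j : ℕ) = p ^ f - 1 := by
  have h := geom_sum_mul_add (p - 1) f
  rw [Nat.sub_add_cancel (by omega : 1 ≤ p)] at h
  rw [Fin.sum_univ_eq_sum_range (fun j => (p - 1) * p ^ j), ← mul_sum, mul_comm]
  omega

lemma sum_sub_add_sum {f n : ℕ} {x : Fin f → ℕ} (hx : ∀ j, x j ≤ n) :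
    ∑ j, (n - x j) + ∑ j, x j = n * f := by
  rw [← sum_add_distrib, sum_congr rfl fun j _ => Nat.sub_add_cancel (hx j)]
  simp [mul_comm]

section Wilson

variable (R : Type*) [Ring R] (p : ℕ) [Fact p.Prime] [CharP R p]

lemma natCast_factorial_sub_one_eq_neg_one : ((p - 1).factorial : R) = -1 := by
  have h := congrArg (ZMod.castHom (dvd_refl p) R) (ZMod.wilsons_lemma (p := p))
  rwa [map_natCast, map_neg, map_one] at h

lemma natCast_descFactorial_mul_factorial {k : ℕ} (hk : k ≤ p - 1) :
    ((p - 1).descFactorial (p - 1 - k) : R) * k.factorial = -1 := by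
  have h := Nat.factorial_mul_descFactorial (Nat.sub_le (p - 1) k)
  rw [Nat.sub_sub_self hk] at h
  rw [← Nat.cast_mul, mul_comm, h, natCast_factorial_sub_one_eq_neg_one]

end Wilson

lemma ite_trace_eq_zero_eq_one_sub {p f : ℕ} [Fact p.Prime] {K 𝔽 : Type*} [Field K] [Fintype K]
    [Algebra (ZMod p) K] [Field 𝔽] (σ₀ : K →+* 𝔽) (hK : Fintype.card K = p ^ f) (a : K) :
    (if Algebra.trace (ZMod p) K a = 0 then 1 else 0 : 𝔽)
      = 1 - (∑ j : Fin f, σ₀ a ^ p ^ (j : ℕ)) ^ (p - 1) := by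
  have hrank : Module.finrank (ZMod p) K = f :=
    Nat.pow_right_injective (Fact.out : p.Prime).two_le
      (by simp only [← hK, Module.card_eq_pow_finrank (K := ZMod p) (V := K), ZMod.card])
  have htr : σ₀ (algebraMap (ZMod p) K (Algebra.trace (ZMod p) K a))
      = ∑ j : Fin f, σ₀ a ^ p ^ (j : ℕ) := by
    rw [FiniteField.algebraMap_trace_eq_sum_pow, hrank, Nat.card_zmod, map_sum,
      ← Fin.sum_univ_eq_sum_range (fun j => σ₀ (a ^ p ^ j)) f]
    simp only [map_pow]
  rw [← htr, ← map_pow, ← map_pow]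
  split_ifs with h
  · rw [h, zero_pow (by have := (Fact.out : p.Prime).two_le; omega)]
    simp
  · rw [ZMod.pow_card_sub_one_eq_one h]
    simp

section PowerElt

variable {p : ℕ} {K 𝔽 : Type*} [Field K] [Fintype K] [Field 𝔽] (σ₀ : K →+* 𝔽)

local notation "q" => Fintype.card K

/-- `S m`. As `0 ^ 0 = 1`, `S 0` is the sum of all elements of `K`. -/
noncomputable def powerElt (m : ℕ) : AddMonoidAlgebra 𝔽 K := ofFun fun a => σ₀ a ^ m

lemma powerElt_mul_powerElt {n m : ℕ} (hn : 0 < n) (hnq : n < q - 1) (hm : m ≤ q - 1) :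
    powerElt σ₀ (q - 1 - n) * powerElt σ₀ m
      = ((-1) ^ (n + 1) * m.choose n : 𝔽) • powerElt σ₀ (m - n) := by
  rw [powerElt, powerElt, ofFun_mul_ofFun, powerElt, ← ofFun_smul]
  congr 1
  funext c
  simpa using congrArg σ₀ (sum_pow_mul_sub_pow hn hnq hm c)

lemma powerElt_card_sub_one : powerElt σ₀ (q - 1) = powerElt σ₀ 0 - 1 := by
  classical
  have hq : q - 1 ≠ 0 := by have := Fintype.one_lt_card (α := K); omega
  have h (a : K) (ha : a ∈ univ.erase 0) :
      AddMonoidAlgebra.single a (σ₀ a ^ (q - 1)) = AddMonoidAlgebra.single a (σ₀ a ^ 0) := by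
    rw [← map_pow, FiniteField.pow_card_sub_one_eq_one a (ne_of_mem_erase ha), map_one, pow_zero]
  simp only [powerElt, ofFun]
  rw [← add_sum_erase _ _ (mem_univ 0), sum_congr rfl h,
    ← add_sum_erase univ (fun a => AddMonoidAlgebra.single a (σ₀ a ^ 0)) (mem_univ 0)]
  simp [hq, AddMonoidAlgebra.one_def]

variable [DecidableEq K]

lemma Yelt_eq_powerElt {j : ℕ} (hj : p ^ j < q - 1) :
    Yelt p σ₀ j = powerElt σ₀ (q - 1 - p ^ j) := by
  have hinv (u : Kˣ) : (σ₀ u ^ p ^ j)⁻¹ = σ₀ u ^ (q - 1 - p ^ j) := by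
    refine (eq_inv_of_mul_eq_one_left ?_).symm
    rw [← pow_add, Nat.sub_add_cancel hj.le, ← map_pow,
      FiniteField.pow_card_sub_one_eq_one _ u.ne_zero, map_one]
  simp only [Yelt, hinv, powerElt, ofFun]
  exact sum_units_eq_sum (g := fun a => AddMonoidAlgebra.single a (σ₀ a ^ (q - 1 - p ^ j)))
    (by simp [zero_pow (show q - 1 - p ^ j ≠ 0 by omega)])

variable [Fact p.Prime] [CharP 𝔽 p]

lemma Yelt_mul_powerElt (hp : Odd p) {j m : ℕ} (hj : p ^ j < q - 1) (hm : m ≤ q - 1) :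
    Yelt p σ₀ j * powerElt σ₀ m = ((m / p ^ j % p : ℕ) : 𝔽) • powerElt σ₀ (m - p ^ j) := by
  rw [Yelt_eq_powerElt σ₀ hj, powerElt_mul_powerElt σ₀ (pow_pos hp.pos j) hj hm,
    (hp.pow.add_one).neg_one_pow, one_mul,
    (CharP.natCast_eq_natCast 𝔽 p).2 (choose_pow_modEq_div_pow_mod p m j)]

lemma Yelt_pow_mul_powerElt (hp : Odd p) {i j m : ℕ} (hj : p ^ j < q - 1) (hm : m ≤ q - 1)
    (hi : i ≤ m / p ^ j % p) :
    Yelt p σ₀ j ^ i * powerElt σ₀ m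
      = ((m / p ^ j % p).descFactorial i : 𝔽) • powerElt σ₀ (m - i * p ^ j) := by
  induction i with
  | zero => simp
  | succ i ih =>
    have hdigit : (m - i * p ^ j) / p ^ j % p = m / p ^ j % p - i := by
      rw [mul_comm, Nat.sub_mul_div, sub_mod_eq_mod_sub (by omega)]
    rw [pow_succ', mul_assoc, ih (by omega), mul_smul_comm,
      Yelt_mul_powerElt σ₀ hp hj (by omega), hdigit, smul_smul, Nat.descFactorial_succ,
      Nat.cast_mul, Nat.sub_sub, ← Nat.succ_mul, mul_comm]

variable {f : ℕ}

/-- The hypothesis on `m` says that its lowest `n` base-`p` digits all equal `p - 1`. -/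
lemma prod_Yelt_pow_mul_powerElt (hp : 2 < p) (hK : q = p ^ f) {n : ℕ} (hn : n ≤ f) {m : ℕ}
    (hm : m ≤ q - 1) (hmod : m % p ^ n = p ^ n - 1) (i : Fin n → ℕ) (hi : ∀ j, i j ≤ p - 1) :
    (∏ j : Fin n, Yelt p σ₀ j ^ i j) * powerElt σ₀ m
      = ((∏ j, (p - 1).descFactorial (i j) : ℕ) : 𝔽) •
          powerElt σ₀ (m - ∑ j, i j * p ^ (j : ℕ)) := by
  induction n generalizing m with
  | zero => simp
  | succ n ih =>
    obtain ⟨hmod', hdigit⟩ := mod_pow_eq_of_mod_pow_succ (by omega) hmod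
    have hlast : i (Fin.last n) * p ^ n ≤ m :=
      (Nat.mul_le_mul_right _ (by have := hi (Fin.last n); omega)).trans
        ((Nat.mul_le_mul_right _ (Nat.mod_le _ p)).trans (Nat.div_mul_le_self m _))
    have hY : Yelt p σ₀ n ^ i (Fin.last n) * powerElt σ₀ m
        = ((p - 1).descFactorial (i (Fin.last n)) : 𝔽) •
            powerElt σ₀ (m - i (Fin.last n) * p ^ n) := by
      rw [← hdigit]
      exact Yelt_pow_mul_powerElt σ₀ ((Fact.out : p.Prime).odd_of_ne_two (by omega))
        (hK ▸ pow_lt_pow_sub_one hp (by omega)) hm (by rw [hdigit]; exact hi _)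
    have hrest := ih (by omega) (m := m - i (Fin.last n) * p ^ n) (by omega)
      (by rw [mul_comm, Nat.sub_mul_mod (by rwa [mul_comm])]; exact hmod')
      (fun j => i j.castSucc) (fun j => hi _)
    simp only [Fin.prod_univ_castSucc, Fin.sum_univ_castSucc, Fin.val_castSucc, Fin.val_last]
    rw [mul_assoc, hY, mul_smul_comm, hrest, smul_smul, Nat.cast_mul, mul_comm, Nat.sub_sub,
      add_comm]

lemma prod_Yelt_pow_mul_powerElt_zero (hp : 2 < p) (hK : q = p ^ f) (i : Fin f → ℕ)
    (hi : ∃ j, 0 < i j) :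
    (∏ j : Fin f, Yelt p σ₀ j ^ i j) * powerElt σ₀ 0 = 0 := by
  obtain ⟨j₀, hj₀⟩ := hi
  have hsplit : ∏ j : Fin f, Yelt p σ₀ j ^ i j
      = (Yelt p σ₀ j₀ ^ (i j₀ - 1) * ∏ j ∈ univ.erase j₀, Yelt p σ₀ j ^ i j) * Yelt p σ₀ j₀ := by
    rw [mul_right_comm, ← pow_succ, Nat.sub_add_cancel hj₀,
      mul_prod_erase univ (fun j : Fin f => Yelt p σ₀ j ^ i j) (mem_univ j₀)]
  rw [hsplit, mul_assoc, Yelt_mul_powerElt σ₀ ((Fact.out : p.Prime).odd_of_ne_two (by omega))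
    (hK ▸ pow_lt_pow_sub_one hp j₀.isLt) (Nat.zero_le _)]
  simp

lemma prod_Yelt_pow_eq (hp : 2 < p) (hK : q = p ^ f) (i : Fin f → ℕ) (hi : ∀ j, i j ≤ p - 1)
    (hi' : ∃ j, 0 < i j) :
    ∏ j : Fin f, Yelt p σ₀ j ^ i j
      = -(((∏ j, (p - 1).descFactorial (i j) : ℕ) : 𝔽) •
          powerElt σ₀ (q - 1 - ∑ j, i j * p ^ (j : ℕ))) := by
  have h := congrArg ((∏ j : Fin f, Yelt p σ₀ j ^ i j) * ·) (powerElt_card_sub_one σ₀)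
  have hmod : (q - 1) % p ^ f = p ^ f - 1 := by
    rw [hK, Nat.mod_eq_of_lt (by have := pow_pos (by omega : 0 < p) f; omega)]
  simp only [mul_sub, prod_Yelt_pow_mul_powerElt_zero σ₀ hp hK i hi', mul_one, zero_sub,
    prod_Yelt_pow_mul_powerElt σ₀ hp hK le_rfl le_rfl hmod i hi] at h
  exact neg_eq_iff_eq_neg.1 h.symm

lemma powerElt_sum_eq_smul_prod_Yelt_pow (hp : 2 < p) (hK : q = p ^ f) (k : Fin f → ℕ)
    (hk : ∀ j, k j ≤ p - 1) (hk' : ∃ j, k j < p - 1) :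
    powerElt σ₀ (∑ j, k j * p ^ (j : ℕ))
      = (-(-1) ^ f * ∏ j, ((k j).factorial : 𝔽)) • ∏ j : Fin f, Yelt p σ₀ j ^ (p - 1 - k j) := by
  have hexp : q - 1 - ∑ j, (p - 1 - k j) * p ^ (j : ℕ) = ∑ j, k j * p ^ (j : ℕ) := by
    have hsplit : ∑ j, (p - 1 - k j) * p ^ (j : ℕ) + ∑ j, k j * p ^ (j : ℕ)
        = ∑ j : Fin f, (p - 1) * p ^ (j : ℕ) := by
      rw [← sum_add_distrib]
      exact sum_congr rfl fun j _ => by rw [← add_mul, Nat.sub_add_cancel (hk j)]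
    rw [sum_sub_one_mul_pow (by omega), ← hK] at hsplit
    omega
  have hc : ((∏ j, (p - 1).descFactorial (p - 1 - k j) : ℕ) : 𝔽) * ∏ j, ((k j).factorial : 𝔽)
      = (-1) ^ f := by
    rw [Nat.cast_prod, ← prod_mul_distrib,
      prod_congr rfl fun j _ => natCast_descFactorial_mul_factorial 𝔽 p (hk j)]
    simp
  have hsq : ((-1 : 𝔽) ^ f) * (-1) ^ f = 1 := by rw [← mul_pow]; simp
  obtain ⟨j₀, hj₀⟩ := hk'
  rw [prod_Yelt_pow_eq σ₀ hp hK (fun j => p - 1 - k j) (fun j => Nat.sub_le _ _)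
    ⟨j₀, by omega⟩, hexp, smul_neg, smul_smul, ← neg_smul]
  conv_lhs => rw [← one_smul 𝔽 (powerElt σ₀ _)]
  congr 1
  linear_combination (-(-1) ^ f) * hc - hsq

lemma multinomial_smul_powerElt_sum (hp : 2 < p) (hK : q = p ^ f) (hf : 1 < f) {k : Fin f → ℕ}
    (hk : k ∈ piAntidiag univ (p - 1)) :
    (Nat.multinomial univ k : 𝔽) • powerElt σ₀ (∑ j, k j * p ^ (j : ℕ))
      = (-1 : 𝔽) ^ f • ∏ j : Fin f, Yelt p σ₀ j ^ (p - 1 - k j) := by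
  have hsum := (mem_piAntidiag.1 hk).1
  have hle (j : Fin f) : k j ≤ p - 1 :=
    hsum ▸ single_le_sum (fun _ _ => Nat.zero_le _) (mem_univ j)
  have hlt : ∃ j, k j < p - 1 := by
    by_contra! h
    have := hsum ▸ card_nsmul_le_sum univ k (p - 1) fun j _ => h j
    simp only [card_univ, Fintype.card_fin, smul_eq_mul] at this
    have := Nat.mul_le_mul_right (p - 1) hf
    omega
  have hmult : (Nat.multinomial univ k : 𝔽) * ∏ j, ((k j).factorial : 𝔽) = -1 := by
    rw [← Nat.cast_prod, ← Nat.cast_mul, mul_comm, Nat.multinomial_spec, hsum,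
      natCast_factorial_sub_one_eq_neg_one]
  rw [powerElt_sum_eq_smul_prod_Yelt_pow σ₀ hp hK k hle hlt, smul_smul]
  congr 1
  linear_combination (-(-1) ^ f : 𝔽) * hmult

end PowerElt

lemma sum_filter_trace_eq_zero_single_eq {p f : ℕ} [Fact p.Prime] {K 𝔽 : Type*} [Field K]
    [Fintype K] [Algebra (ZMod p) K] [Field 𝔽] (σ₀ : K →+* 𝔽) (hK : Fintype.card K = p ^ f) :
    ∑ a ∈ univ.filter (fun a : K => Algebra.trace (ZMod p) K a = 0),
        AddMonoidAlgebra.single a (1 : 𝔽)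
      = powerElt σ₀ 0 - ∑ k ∈ piAntidiag univ (p - 1),
          (Nat.multinomial univ k : 𝔽) • powerElt σ₀ (∑ j : Fin f, k j * p ^ (j : ℕ)) := by
  have hpow (a : K) : (∑ j : Fin f, σ₀ a ^ p ^ (j : ℕ)) ^ (p - 1)
      = ∑ k ∈ piAntidiag univ (p - 1),
          (Nat.multinomial univ k : 𝔽) * σ₀ a ^ (∑ j : Fin f, k j * p ^ (j : ℕ)) := by
    rw [sum_pow_eq_sum_piAntidiag]
    refine sum_congr rfl fun k _ => ?_
    rw [← prod_pow_eq_pow_sum]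
    exact congrArg _ (prod_congr rfl fun j _ => by rw [← pow_mul, mul_comm])
  calc ∑ a ∈ univ.filter (fun a : K => Algebra.trace (ZMod p) K a = 0),
        AddMonoidAlgebra.single a (1 : 𝔽)
      = ofFun fun a => (if Algebra.trace (ZMod p) K a = 0 then 1 else 0 : 𝔽) := by
        rw [sum_filter, ofFun]
        exact sum_congr rfl fun a _ => by split_ifs <;> simp
    _ = ofFun ((fun a => σ₀ a ^ 0) - ∑ k ∈ piAntidiag univ (p - 1),
          (Nat.multinomial univ k : 𝔽) • fun a => σ₀ a ^ (∑ j : Fin f, k j * p ^ (j : ℕ))) := by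
        congr 1
        funext a
        simp [ite_trace_eq_zero_eq_one_sub σ₀ hK, hpow]
    _ = _ := by
        simp only [ofFun_sub, ofFun_sum, ofFun_smul]
        rfl

lemma sum_piAntidiag_sub_eq_sum_filter {M : Type*} [AddCommMonoid M] {p f : ℕ} (hp : 0 < p)
    (hf : 0 < f) (g : (Fin f → ℕ) → M) :
    ∑ k ∈ piAntidiag univ (p - 1), g (fun j => p - 1 - k j)
      = ∑ t ∈ univ.filter (fun t : Fin f → Fin p => ∑ j, (t j : ℕ) = (p - 1) * (f - 1)),
          g (fun j => t j) := by
  have hpf : (p - 1) * (f - 1) + (p - 1) = (p - 1) * f := by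
    rw [← Nat.mul_succ]; congr 1; omega
  have hle {k : Fin f → ℕ} (hk : k ∈ piAntidiag univ (p - 1)) (j : Fin f) : k j ≤ p - 1 :=
    (mem_piAntidiag.1 hk).1 ▸ single_le_sum (fun _ _ => Nat.zero_le _) (mem_univ j)
  refine sum_nbij' (fun k j => ⟨p - 1 - k j, by omega⟩) (fun t j => p - 1 - t j) ?_ ?_ ?_ ?_ ?_
  · intro k hk
    have := sum_sub_add_sum (hle hk)
    rw [(mem_piAntidiag.1 hk).1] at this
    simp only [mem_filter, mem_univ, true_and]
    omega
  · intro t ht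
    have htle (j : Fin f) : (t j : ℕ) ≤ p - 1 := by have := (t j).isLt; omega
    have := sum_sub_add_sum htle
    rw [(mem_filter.1 ht).2] at this
    simp only [mem_piAntidiag, mem_univ, implies_true, and_true]
    omega
  · intro k hk
    funext j
    have := hle hk j
    simp only
    omega
  · intro t _
    funext j
    have := (t j).isLt
    ext
    simp only
    omega
  · intro k _
    rfl

/-- Lemma `lem:tr0`, §3.2.2.  For `f > 1`, in `𝔽[K]` one has
`Σ_{λ ∈ K, Tr(λ)=0} [λ]
  = (−1)^{f−1} (∏_j Y_j^{p−1} + Σ_{(i_j), Σ i_j = (p−1)(f−1), 0 ≤ i_j ≤ p−1} ∏_j Y_j^{i_j})`. -/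
theorem statement16 (p f : ℕ) [Fact p.Prime] (hp : 2 < p) (hf : 1 < f)
    (K : Type*) [Field K] [Fintype K] [DecidableEq K] [Algebra (ZMod p) K]
    (hK : Fintype.card K = p ^ f)
    (𝔽 : Type*) [Field 𝔽] (σ₀ : K →+* 𝔽) :
    ∑ a ∈ Finset.univ.filter (fun a : K => Algebra.trace (ZMod p) K a = 0),
        AddMonoidAlgebra.single a (1 : 𝔽)
      = ((-1 : 𝔽) ^ (f - 1)) •
          (∏ j : Fin f, Yelt p σ₀ (j : ℕ) ^ (p - 1)
            + ∑ t ∈ Finset.univ.filter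
                (fun t : Fin f → Fin p => ∑ j : Fin f, (t j : ℕ) = (p - 1) * (f - 1)),
                ∏ j : Fin f, Yelt p σ₀ (j : ℕ) ^ (t j : ℕ)) := by
  have : CharP K p := charP_of_injective_ringHom (algebraMap (ZMod p) K).injective p
  have : CharP 𝔽 p := charP_of_injective_ringHom σ₀.injective p
  have hS0 : powerElt σ₀ 0 = (-(-1) ^ f : 𝔽) • ∏ j : Fin f, Yelt p σ₀ j ^ (p - 1) := by
    simpa using powerElt_sum_eq_smul_prod_Yelt_pow σ₀ hp hK 0 (by simp)
      ⟨⟨0, by omega⟩, by simp; omega⟩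
  have hsign : (-1 : 𝔽) ^ (f - 1) = -(-1) ^ f := by
    obtain ⟨g, rfl⟩ : ∃ g, f = g + 1 := ⟨f - 1, by omega⟩
    simp [pow_succ]
  rw [sum_filter_trace_eq_zero_single_eq σ₀ hK,
    sum_congr rfl fun k hk => multinomial_smul_powerElt_sum σ₀ hp hK hf hk, hS0, ← smul_sum,
    sum_piAntidiag_sub_eq_sum_filter (by omega) (by omega) fun e => ∏ j : Fin f, Yelt p σ₀ j ^ e j,
    hsign]
  module

end BHHMS
end

section
/- For each 0 ≤ j ≤ f−1 choose t_j ∈ {y_j, z_j, y_j z_j} and let u_j be the complementary element (u_j := z_j if t_j = y_j; u_j := y_j if t_j = z_j; u_j := 1 if t_j = y_j z_j), so that t_j u_j = y_j z_j. Let 𝔞 := (t_0,…,t_{f−1}) ⊆ R, an ideal containing all y_j z_j, and set t' := ∏_{j=0}^{f−1} u_j. Then: (a) the annihilator R̄[𝔞] of 𝔞 in R̄ equals the principal ideal t'·R̄, and multiplication by t' induces an isomorphism of R̄-modules R̄/𝔞R̄ ≅ t'·R̄; (b) consequently there is an isomorphism of R-modules Hom_{R̄}(R/𝔞, R̄) ≅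 R/𝔞. (Paper: the module-theoretic content (eq:isom-barR) of Proposition 'prop:Ext-R/I' in §3.3.1, computing E^{2f} of the cyclic modules R/𝔞(λ).) -/
/-!
Setup (Proposition `prop:Ext-R/I`, its module-theoretic content (eq:isom-barR), §3.3.1 of
the paper): `R = 𝔽[y_0,…,y_{f−1},z_0,…,z_{f−1}]` is a polynomial ring in `2f` variables
(indexed by `Fin f ⊕ Fin f`) and `R̄ = R/(y_j z_j : 0 ≤ j ≤ f−1)`.  For the choice
`t_j ∈ {y_j, z_j, y_j z_j}` with complementary element `u_j` (so that `t_j u_j = y_j z_j`),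
`𝔞 = (t_0,…,t_{f−1})` and `t' = ∏_j u_j`.  The `R̄`-module `R/𝔞` is `R̄/𝔞R̄`.
-/

set_option synthInstance.maxHeartbeats 400000
set_option maxHeartbeats 1000000

namespace BHHMS

/-- `R = 𝔽[y_0,…,y_{f−1},z_0,…,z_{f−1}]`. -/
abbrev PolyR (𝔽 : Type*) [Field 𝔽] (f : ℕ) := MvPolynomial (Fin f ⊕ Fin f) 𝔽

/-- The variable `y j`. -/
noncomputable def yv (𝔽 : Type*) [Field 𝔽] (f : ℕ) (j : Fin f) : PolyR 𝔽 f :=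
  MvPolynomial.X (Sum.inl j)

/-- The variable `z j`. -/
noncomputable def zv (𝔽 : Type*) [Field 𝔽] (f : ℕ) (j : Fin f) : PolyR 𝔽 f :=
  MvPolynomial.X (Sum.inr j)

/-- The ideal `(y_j z_j : 0 ≤ j ≤ f−1)` of `R`. -/
noncomputable def Irel (𝔽 : Type*) [Field 𝔽] (f : ℕ) : Ideal (PolyR 𝔽 f) :=
  Ideal.span (Set.range fun j : Fin f => yv 𝔽 f j * zv 𝔽 f j)

/-- `R̄ = R/(y_j z_j : 0 ≤ j ≤ f−1)`. -/
abbrev RBar (𝔽 : Type*) [Field 𝔽] (f : ℕ) := PolyR 𝔽 f ⧸ Irel 𝔽 f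

/-!
All ideals involved in `R` are monomial ideals, so membership is decided monomial by monomial.
The generators `y_j z_j` of the relations involve pairwise disjoint sets of variables and
`t_j u_j = y_j z_j`. Hence for a monomial `m`, all `t_j m` lie in the relation ideal iff `m` does
or every `u_j` divides `m`, i.e. `t' ∣ m`; and `t' m` lies in it iff some `t_k` divides `m`. In `R̄`
this says `R̄[𝔞] = t'R̄` and that multiplication by `t'` has kernel `𝔞R̄`. For any ideal,
evaluation at `1` identifies `Hom_{R̄}(R̄/𝔞R̄, R̄)` with `R̄[𝔞]`.
-/

open MvPolynomial

section Exponents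

variable {σ ι : Type*}

theorem le_add_iff_of_disjoint {n a m : σ →₀ ℕ} (h : Disjoint n.support a.support) :
    n ≤ a + m ↔ n ≤ m := by
  refine ⟨fun hle i => ?_, fun hle => hle.trans le_add_self⟩
  by_cases hi : i ∈ n.support
  · simpa [Finsupp.notMem_support_iff.mp (Finset.disjoint_left.mp h hi)] using hle i
  · simp [Finsupp.notMem_support_iff.mp hi]

variable [Fintype ι] {n s a : ι → σ →₀ ℕ}

theorem sum_le_iff_of_pairwise_disjoint
    (hn : Pairwise fun j k => Disjoint (n j).support (n k).support) (ha : ∀ j, a j ≤ n j)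
    {m : σ →₀ ℕ} : ∑ j, a j ≤ m ↔ ∀ j, a j ≤ m := by
  refine ⟨fun h j => (Finset.single_le_sum (fun _ _ => zero_le) (Finset.mem_univ j)).trans h,
    fun h i => ?_⟩
  rw [Finsupp.finsetSum_apply]
  by_cases hi : ∃ k, i ∈ (n k).support
  · obtain ⟨k, hk⟩ := hi
    rw [Finset.sum_eq_single k]
    · exact h k i
    · intro j _ hjk
      have : n j i = 0 := Finsupp.notMem_support_iff.mp (Finset.disjoint_right.mp (hn hjk) hk)
      exact Nat.eq_zero_of_le_zero (this ▸ ha j i)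
    · simp
  · simp only [not_exists] at hi
    rw [Finset.sum_eq_zero fun j _ =>
      Nat.eq_zero_of_le_zero (Finsupp.notMem_support_iff.mp (hi j) ▸ ha j i)]
    exact zero_le

theorem le_sum_add_iff (hn : Pairwise fun j k => Disjoint (n j).support (n k).support)
    (hsa : ∀ j, s j + a j = n j) (k : ι) (m : σ →₀ ℕ) :
    n k ≤ ∑ j, a j + m ↔ s k ≤ m := by
  classical
  have hdisj : Disjoint (s k).support (∑ j ∈ Finset.univ.erase k, a j).support := by
    refine Finset.disjoint_of_subset_right Finsupp.support_finsetSum ?_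
    refine (Finset.disjoint_biUnion_right _ _ _).mpr fun j hj => ?_
    refine (hn (Finset.ne_of_mem_erase hj).symm).mono (Finsupp.support_mono ?_)
      (Finsupp.support_mono ?_)
    · exact hsa k ▸ le_self_add
    · exact hsa j ▸ le_add_self
  rw [← Finset.add_sum_erase _ _ (Finset.mem_univ k), ← hsa k, add_comm (s k), add_assoc,
    add_le_add_iff_left, le_add_iff_of_disjoint hdisj]

theorem forall_exists_le_add_iff
    (hn : Pairwise fun j k => Disjoint (n j).support (n k).support)
    (hsa : ∀ j, s j + a j = n j) (m : σ →₀ ℕ) :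
    (∀ j, ∃ k, n k ≤ s j + m) ↔ ∑ j, a j ≤ m ∨ ∃ k, n k ≤ m := by
  rw [sum_le_iff_of_pairwise_disjoint hn fun j => hsa j ▸ le_add_self]
  by_cases hm : ∃ k, n k ≤ m
  · obtain ⟨k, hk⟩ := hm
    exact iff_of_true (fun _ => ⟨k, hk.trans le_add_self⟩) (Or.inr ⟨k, hk⟩)
  · simp only [hm, or_false]
    refine forall_congr' fun j => ⟨fun ⟨k, hk⟩ => ?_, fun h => ⟨j, ?_⟩⟩
    · obtain rfl : k = j := by
        by_contra hkj
        refine hm ⟨k, (le_add_iff_of_disjoint ?_).mp hk⟩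
        exact (hn hkj).mono_right (Finsupp.support_mono (hsa j ▸ le_self_add))
      rwa [← hsa k, add_le_add_iff_left] at hk
    · rw [← hsa j]
      exact (add_le_add_iff_left (s j)).mpr h

end Exponents

section MonomialIdeals

variable {σ R ι : Type*} [CommSemiring R]

theorem monomial_mul_mem_span_monomial_image_iff {a : σ →₀ ℕ} {x : MvPolynomial σ R}
    {S : Set (σ →₀ ℕ)} :
    monomial a 1 * x ∈ Ideal.span ((fun e => monomial e (1 : R)) '' S) ↔
      ∀ m ∈ x.support, ∃ e ∈ S, e ≤ a + m := by
  have hsupp : (monomial a 1 * x).support = x.support.map (addLeftEmbedding a) :=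
    AddMonoidAlgebra.support_coeff_single_mul x 1 (by simp) a
  rw [mem_ideal_span_monomial_image, hsupp, Finset.forall_mem_map]
  rfl

variable [Fintype ι] {n s a : ι → σ →₀ ℕ}

theorem forall_monomial_mul_mem_span_iff
    (hn : Pairwise fun j k => Disjoint (n j).support (n k).support)
    (hsa : ∀ j, s j + a j = n j) (x : MvPolynomial σ R) :
    (∀ j, monomial (s j) 1 * x ∈ Ideal.span ((fun e => monomial e (1 : R)) '' Set.range n)) ↔
      x ∈ Ideal.span {∏ j, monomial (a j) (1 : R)} ⊔
        Ideal.span ((fun e => monomial e (1 : R)) '' Set.range n) := by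
  rw [← monomial_sum_one]
  have hspan : Ideal.span {monomial (∑ j, a j) (1 : R)} ⊔
      Ideal.span ((fun e => monomial e (1 : R)) '' Set.range n) =
      Ideal.span ((fun e => monomial e (1 : R)) '' insert (∑ j, a j) (Set.range n)) := by
    rw [Set.image_insert_eq, Set.insert_eq, Ideal.span_union]
  rw [hspan, mem_ideal_span_monomial_image]
  simp only [monomial_mul_mem_span_monomial_image_iff, Set.exists_mem_insert,
    Set.exists_range_iff]
  exact ⟨fun h m hm => (forall_exists_le_add_iff hn hsa m).mp fun j => h j m hm,
    fun h j m hm => (forall_exists_le_add_iff hn hsa m).mpr (h m hm) j⟩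

theorem prod_monomial_mul_mem_span_iff
    (hn : Pairwise fun j k => Disjoint (n j).support (n k).support)
    (hsa : ∀ j, s j + a j = n j) (x : MvPolynomial σ R) :
    (∏ j, monomial (a j) 1) * x ∈ Ideal.span ((fun e => monomial e (1 : R)) '' Set.range n) ↔
      x ∈ Ideal.span (Set.range fun j => monomial (s j) (1 : R)) := by
  rw [← monomial_sum_one, monomial_mul_mem_span_monomial_image_iff,
    Set.range_comp' (fun e => monomial e (1 : R)) s, mem_ideal_span_monomial_image]
  simp only [Set.exists_range_iff, le_sum_add_iff hn hsa]

end MonomialIdeals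

section Quotient

variable {A : Type*} [CommRing A]

def homQuotEquivColon (I : Ideal A) : ((A ⧸ I) →ₗ[A] A) ≃ₗ[A] (⊥ : Ideal A).colon I :=
  I.dualQuotEquivDualAnnihilator ≪≫ₗ
    (LinearMap.ringLmapEquivSelf A A A).submoduleMap _ ≪≫ₗ
    LinearEquiv.ofEq _ _ (by
      ext r
      simp [Submodule.mem_map_equiv, Submodule.mem_dualAnnihilator, Submodule.mem_annihilator,
        mul_comm])

variable {R ι : Type*} [CommRing R] (I : Ideal R) (g : ι → R) (w : R)

theorem colon_bot_span_range_mk_eq (h : ∀ x, (∀ j, g j * x ∈ I) ↔ x ∈ Ideal.span {w} ⊔ I) :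
    (⊥ : Ideal (R ⧸ I)).colon (Ideal.span (Set.range fun j => Ideal.Quotient.mk I (g j))) =
      Ideal.span {Ideal.Quotient.mk I w} := by
  have hspan :
      Ideal.span {Ideal.Quotient.mk I w} = (Ideal.span {w}).map (Ideal.Quotient.mk I) := by
    rw [Ideal.map_span, Set.image_singleton]
  ext ξ
  obtain ⟨x, rfl⟩ := Ideal.Quotient.mk_surjective ξ
  rw [Ideal.colon_span, Submodule.mem_colon, Set.forall_mem_range, hspan,
    Ideal.mem_quotient_iff_mem_sup, ← h]
  simp only [smul_eq_mul, Submodule.mem_bot, ← map_mul, Ideal.Quotient.eq_zero_iff_mem,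
    mul_comm x]

theorem torsionOf_mk_eq (h : ∀ x, w * x ∈ I ↔ x ∈ Ideal.span (Set.range g)) :
    Ideal.torsionOf (R ⧸ I) (R ⧸ I) (Ideal.Quotient.mk I w) =
      Ideal.span (Set.range fun j => Ideal.Quotient.mk I (g j)) := by
  have hI : I ≤ Ideal.span (Set.range g) := fun x hx => (h x).mp (I.mul_mem_left w hx)
  ext ξ
  obtain ⟨x, rfl⟩ := Ideal.Quotient.mk_surjective ξ
  rw [Ideal.mem_torsionOf_iff, smul_eq_mul, ← map_mul, Ideal.Quotient.eq_zero_iff_mem, mul_comm,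
    h, Set.range_comp' (Ideal.Quotient.mk I) g, ← Ideal.map_span, Ideal.mem_quotient_iff_mem hI]

end Quotient

section RelationIdeal

variable {𝔽 : Type*} [Field 𝔽] {f : ℕ}

noncomputable def yzExponent (j : Fin f) : (Fin f ⊕ Fin f) →₀ ℕ :=
  Finsupp.single (Sum.inl j) 1 + Finsupp.single (Sum.inr j) 1

theorem pairwise_disjoint_support_yzExponent :
    Pairwise fun j k : Fin f => Disjoint (yzExponent j).support (yzExponent k).support := by
  intro j k hjk
  rw [Finset.disjoint_left]
  rintro (i | i) <;> simp [yzExponent, Finsupp.single_apply] <;> omega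

theorem yv_mul_zv (j : Fin f) : yv 𝔽 f j * zv 𝔽 f j = monomial (yzExponent j) 1 := by
  rw [yv, zv, X, X, monomial_mul, one_mul, yzExponent]

theorem Irel_eq_span_monomial :
    Irel 𝔽 f = Ideal.span ((fun e => monomial e (1 : 𝔽)) '' Set.range yzExponent) := by
  rw [Irel, ← Set.range_comp]
  simp only [Function.comp_def, yv_mul_zv]

theorem exists_monomial_exponents {t u : PolyR 𝔽 f} {j : Fin f}
    (h : (t = yv 𝔽 f j ∧ u = zv 𝔽 f j) ∨ (t = zv 𝔽 f j ∧ u = yv 𝔽 f j) ∨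
      (t = yv 𝔽 f j * zv 𝔽 f j ∧ u = 1)) :
    ∃ s a, t = monomial s 1 ∧ u = monomial a 1 ∧ s + a = yzExponent j := by
  rcases h with ⟨rfl, rfl⟩ | ⟨rfl, rfl⟩ | ⟨rfl, rfl⟩
  · exact ⟨_, _, rfl, rfl, rfl⟩
  · exact ⟨_, _, rfl, rfl, add_comm _ _⟩
  · exact ⟨_, 0, yv_mul_zv j, by rw [monomial_zero', C_1], add_zero _⟩

end RelationIdeal

theorem statement17_general (𝔽 : Type*) [Field 𝔽] (f : ℕ)
    (t u : Fin f → PolyR 𝔽 f)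
    (htu : ∀ j, (t j = yv 𝔽 f j ∧ u j = zv 𝔽 f j) ∨ (t j = zv 𝔽 f j ∧ u j = yv 𝔽 f j) ∨
      (t j = yv 𝔽 f j * zv 𝔽 f j ∧ u j = 1)) :
    (Submodule.colon (⊥ : Ideal (RBar 𝔽 f))
        (Ideal.span (Set.range fun j => Ideal.Quotient.mk (Irel 𝔽 f) (t j)))
      = Ideal.span {Ideal.Quotient.mk (Irel 𝔽 f) (∏ j, u j)}) ∧
    (∃ e : (RBar 𝔽 f ⧸ Ideal.span (Set.range fun j => Ideal.Quotient.mk (Irel 𝔽 f) (t j)))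
          ≃ₗ[RBar 𝔽 f] ↥(Ideal.span {Ideal.Quotient.mk (Irel 𝔽 f) (∏ j, u j)}),
      ∀ x : RBar 𝔽 f,
        (e (Submodule.Quotient.mk x) : RBar 𝔽 f)
          = Ideal.Quotient.mk (Irel 𝔽 f) (∏ j, u j) * x) ∧
    Nonempty
      (((RBar 𝔽 f ⧸ Ideal.span (Set.range fun j => Ideal.Quotient.mk (Irel 𝔽 f) (t j)))
          →ₗ[RBar 𝔽 f] RBar 𝔽 f)
        ≃ₗ[RBar 𝔽 f]
        (RBar 𝔽 f ⧸ Ideal.span (Set.range fun j => Ideal.Quotient.mk (Irel 𝔽 f) (t j)))) := by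
  choose s a hts hua hsa using fun j => exists_monomial_exponents (htu j)
  obtain rfl : t = fun j => monomial (s j) 1 := funext hts
  obtain rfl : u = fun j => monomial (a j) 1 := funext hua
  have hcolon := colon_bot_span_range_mk_eq (Irel 𝔽 f) _ _ fun x => by
    rw [Irel_eq_span_monomial]
    exact forall_monomial_mul_mem_span_iff pairwise_disjoint_support_yzExponent hsa x
  have htorsion := torsionOf_mk_eq (Irel 𝔽 f) _ _ fun x => by
    rw [Irel_eq_span_monomial]
    exact prod_monomial_mul_mem_span_iff pairwise_disjoint_support_yzExponent hsa x
  let e := Submodule.quotEquivOfEq _ _ htorsion.symm ≪≫ₗ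
    Ideal.quotTorsionOfEquivSpanSingleton _ _ _
  exact ⟨hcolon, ⟨e, fun x => mul_comm x _⟩,
    ⟨homQuotEquivColon _ ≪≫ₗ LinearEquiv.ofEq _ _ hcolon ≪≫ₗ e.symm⟩⟩

/-- (eq:isom-barR) in Proposition `prop:Ext-R/I`, §3.3.1.
(a) The annihilator `R̄[𝔞] = {x ∈ R̄ : 𝔞·x = 0}` equals the principal ideal `t'·R̄`, and
multiplication by `t'` gives an `R̄`-module isomorphism `R̄/𝔞R̄ ≅ t'·R̄`;
(b) consequently `Hom_{R̄}(R/𝔞, R̄) ≅ R/𝔞` (as `R̄`-modules, hence as `R`-modules). -/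
theorem statement17 (𝔽 : Type*) [Field 𝔽] (f : ℕ) (hf : 1 ≤ f)
    (t u : Fin f → PolyR 𝔽 f)
    (htu : ∀ j, (t j = yv 𝔽 f j ∧ u j = zv 𝔽 f j) ∨ (t j = zv 𝔽 f j ∧ u j = yv 𝔽 f j) ∨
      (t j = yv 𝔽 f j * zv 𝔽 f j ∧ u j = 1)) :
    (Submodule.colon (⊥ : Ideal (RBar 𝔽 f))
        (Ideal.span (Set.range fun j => Ideal.Quotient.mk (Irel 𝔽 f) (t j)))
      = Ideal.span {Ideal.Quotient.mk (Irel 𝔽 f) (∏ j, u j)}) ∧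
    (∃ e : (RBar 𝔽 f ⧸ Ideal.span (Set.range fun j => Ideal.Quotient.mk (Irel 𝔽 f) (t j)))
          ≃ₗ[RBar 𝔽 f] ↥(Ideal.span {Ideal.Quotient.mk (Irel 𝔽 f) (∏ j, u j)}),
      ∀ x : RBar 𝔽 f,
        (e (Submodule.Quotient.mk x) : RBar 𝔽 f)
          = Ideal.Quotient.mk (Irel 𝔽 f) (∏ j, u j) * x) ∧
    Nonempty
      (((RBar 𝔽 f ⧸ Ideal.span (Set.range fun j => Ideal.Quotient.mk (Irel 𝔽 f) (t j)))
          →ₗ[RBar 𝔽 f] RBar 𝔽 f)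
        ≃ₗ[RBar 𝔽 f]
        (RBar 𝔽 f ⧸ Ideal.span (Set.range fun j => Ideal.Quotient.mk (Irel 𝔽 f) (t j)))) :=
  statement17_general 𝔽 f t u htu

end BHHMS
end
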